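/- arXiv:1009.0143 — 2 statements merged into one kernel-verified Lean document; each statement's English description precedes it below -/
import Mathlib

section
/- If model C is ergodic with unique invariant measure δ_{∘^ℤ} (i.e., νF_C^n converges weakly to δ_{∘^ℤ} for every probability measure ν on {∘,•}^ℤ), then model B is ergodic with unique invariant measure δ_{∘^ℤ} (i.e., νF_B^n converges weakly to δ_{∘^ℤ} for every probability measure ν on {∘,•}^ℤ). (Part of Lemma 4.3.) -/
open MeasureTheory ProbabilityTheory Filter

/-!
Conventions: a configuration of models B/C is `y : ℤ → Bool` (`false` = ∘ empty,
`true` = • particle); an update is `u : ℤ → Bool` (`true` = ↑, `false` = →).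
The space `ℤ → Bool` carries the product topology (with `Bool` discrete) and the
product (Borel) σ-algebra; weak convergence is tested on bounded continuous functions.
-/

/-- The local map `ℬ` of model B: the `i`-th coordinate of `ℬ(y,u)` is `•` iff
`(y_{i-1}y_i, u_{i-1}u_i) ∈ {(•∘, →⋅), (∘•, ⋅↑), (••, ↑↑), (••, →→)}`. -/
def modelB (y u : ℤ → Bool) : ℤ → Bool := fun i =>
  match y (i - 1), y i with
  | true, false => !u (i - 1)
  | false, true => u i
  | true, true => u (i - 1) == u i
  | false, false => false

/-- The local map `𝒞` of model C: the `i`-th coordinate of `𝒞(z,u)` is `•` iff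
`(z_{i-1}z_i, u_{i-1}u_i) ∈ {(•∘, →⋅), (∘•, ⋅↑), (••, ↑↑), (••, →⋅)}`. -/
def modelC (z u : ℤ → Bool) : ℤ → Bool := fun i =>
  match z (i - 1), z i with
  | true, false => !u (i - 1)
  | false, true => u i
  | true, true => !u (i - 1) || u i
  | false, false => false

/-- `lam` is the product over `ℤ` of the uniform measure on the two-element update
alphabet `𝒰`. -/
def IsUniformProduct (lam : Measure (ℤ → Bool)) : Prop :=
  IsProbabilityMeasure lam ∧
    ∀ (s : Finset ℤ) (f : ℤ → Bool),
      lam {u | ∀ i ∈ s, u i = f i} = (1 / 2 : ENNReal) ^ s.card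

/-- `ν F_B`: the pushforward of `ν ⊗ lam` under `ℬ`. -/
noncomputable def FB (lam ν : Measure (ℤ → Bool)) : Measure (ℤ → Bool) :=
  Measure.map (fun p : (ℤ → Bool) × (ℤ → Bool) => modelB p.1 p.2) (ν.prod lam)

/-- `ν F_C`: the pushforward of `ν ⊗ lam` under `𝒞`. -/
noncomputable def FC (lam ν : Measure (ℤ → Bool)) : Measure (ℤ → Bool) :=
  Measure.map (fun p : (ℤ → Bool) × (ℤ → Bool) => modelC p.1 p.2) (ν.prod lam)

/-- The empty configuration `∘^ℤ`. -/
def emptyConfig : ℤ → Bool := fun _ => false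

/-!
Drive both models with the same updates `u`. Coordinatewise `ℬ(y,u) ≤ 𝒞(y,u)`, and `𝒞(·,u)` is
monotone, so by induction `νF_Bⁿ` is stochastically dominated by `νF_Cⁿ`. A closed set avoiding
`∘^ℤ` lies in the clopen up-set "some site of a finite window is occupied", whose `νF_Cⁿ`-mass
tends to `0` by the weak convergence of model C; hence so does its `νF_Bⁿ`-mass, and this
forces `νF_Bⁿ → δ_{∘^ℤ}` by the portmanteau theorem.
-/

lemma measurable_nearestNeighbour (r : Bool → Bool → Bool → Bool → Bool) :
    Measurable fun p : (ℤ → Bool) × (ℤ → Bool) =>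
      fun i => r (p.1 (i - 1)) (p.1 i) (p.2 (i - 1)) (p.2 i) :=
  measurable_pi_iff.mpr fun i => (measurable_of_countable fun q : Bool × Bool × Bool × Bool =>
    r q.1 q.2.1 q.2.2.1 q.2.2.2).comp
      (f := fun p : (ℤ → Bool) × (ℤ → Bool) => (p.1 (i - 1), p.1 i, p.2 (i - 1), p.2 i))
      (by fun_prop)

lemma measurable_modelB : Measurable fun p : (ℤ → Bool) × (ℤ → Bool) => modelB p.1 p.2 :=
  measurable_nearestNeighbour fun a b c d =>
    match a, b with
    | true, false => !c
    | false, true => d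
    | true, true => c == d
    | false, false => false

lemma measurable_modelC : Measurable fun p : (ℤ → Bool) × (ℤ → Bool) => modelC p.1 p.2 :=
  measurable_nearestNeighbour fun a b c d =>
    match a, b with
    | true, false => !c
    | false, true => d
    | true, true => !c || d
    | false, false => false

lemma monotone_modelC (u : ℤ → Bool) : Monotone fun z => modelC z u := by
  intro z z' h i
  have h₁ := h (i - 1)
  have h₂ := h i
  simp only [modelC]
  revert h₁ h₂
  cases z (i - 1) <;> cases z i <;> cases z' (i - 1) <;> cases z' i <;>
    cases u (i - 1) <;> cases u i <;> simp

lemma modelB_le_modelC (y u : ℤ → Bool) : modelB y u ≤ modelC y u := by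
  intro i
  simp only [modelB, modelC]
  cases y (i - 1) <;> cases y i <;> cases u (i - 1) <;> cases u i <;> simp

instance isProbabilityMeasure_iterate_FB (lam ν : Measure (ℤ → Bool)) [IsProbabilityMeasure lam]
    [IsProbabilityMeasure ν] (n : ℕ) : IsProbabilityMeasure ((FB lam)^[n] ν) :=
  Function.Iterate.rec _ ‹_›
    (fun _ _ => Measure.isProbabilityMeasure_map measurable_modelB.aemeasurable) n

instance isProbabilityMeasure_iterate_FC (lam ν : Measure (ℤ → Bool)) [IsProbabilityMeasure lam]
    [IsProbabilityMeasure ν] (n : ℕ) : IsProbabilityMeasure ((FC lam)^[n] ν) :=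
  Function.Iterate.rec _ ‹_›
    (fun _ _ => Measure.isProbabilityMeasure_map measurable_modelC.aemeasurable) n

def StochasticallyLE {α : Type*} [MeasurableSpace α] [Preorder α] (μ ν : Measure α) : Prop :=
  ∀ s, MeasurableSet s → IsUpperSet s → μ s ≤ ν s

lemma StochasticallyLE.map_prod {α β γ : Type*} [MeasurableSpace α] [Preorder α]
    [MeasurableSpace β] [MeasurableSpace γ] [Preorder γ] {f g : α → β → γ}
    (hf : Measurable fun p : α × β => f p.1 p.2) (hg : Measurable fun p : α × β => g p.1 p.2)
    (hfg : ∀ a b, f a b ≤ g a b) (hg_mono : ∀ b, Monotone fun a => g a b)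
    (κ : Measure β) [SFinite κ] {μ μ' : Measure α} [SFinite μ] [SFinite μ']
    (h : StochasticallyLE μ μ') :
    StochasticallyLE ((μ.prod κ).map fun p => f p.1 p.2) ((μ'.prod κ).map fun p => g p.1 p.2) := by
  intro s hs hup
  have hgs : MeasurableSet ((fun p : α × β => g p.1 p.2) ⁻¹' s) := hg hs
  rw [Measure.map_apply hf hs, Measure.map_apply hg hs]
  calc (μ.prod κ) ((fun p => f p.1 p.2) ⁻¹' s)
      ≤ (μ.prod κ) ((fun p => g p.1 p.2) ⁻¹' s) := measure_mono fun p hp => hup (hfg _ _) hp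
    _ = ∫⁻ b, μ {a | g a b ∈ s} ∂κ := Measure.prod_apply_symm hgs
    _ ≤ ∫⁻ b, μ' {a | g a b ∈ s} ∂κ := lintegral_mono fun b =>
        h _ (measurable_prodMk_right hgs) fun _ _ ha hmem => hup (hg_mono b ha) hmem
    _ = (μ'.prod κ) ((fun p => g p.1 p.2) ⁻¹' s) := (Measure.prod_apply_symm hgs).symm

lemma stochasticallyLE_iterate_FB_FC (lam ν : Measure (ℤ → Bool)) [IsProbabilityMeasure lam]
    [IsProbabilityMeasure ν] (n : ℕ) : StochasticallyLE ((FB lam)^[n] ν) ((FC lam)^[n] ν) := by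
  induction n with
  | zero => exact fun _ _ _ => le_rfl
  | succ n ih =>
    rw [Function.iterate_succ_apply', Function.iterate_succ_apply']
    exact ih.map_prod measurable_modelB measurable_modelC modelB_le_modelC monotone_modelC lam

def occupiedSomewhere (S : Finset ℤ) : Set (ℤ → Bool) := ⋃ i ∈ S, {x | x i = true}

lemma isUpperSet_occupiedSomewhere (S : Finset ℤ) : IsUpperSet (occupiedSomewhere S) :=
  isUpperSet_iUnion₂ fun i _ x _ hxy (hx : x i = true) =>
    le_top.antisymm (hx.symm.trans_le (hxy i))

lemma isClopen_occupiedSomewhere (S : Finset ℤ) : IsClopen (occupiedSomewhere S) :=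
  isClopen_biUnion_finset fun i _ => (isClopen_discrete {true}).preimage (continuous_apply i)

lemma exists_subset_occupiedSomewhere {F : Set (ℤ → Bool)} (hF : IsClosed F)
    (hF₀ : emptyConfig ∉ F) : ∃ S, F ⊆ occupiedSomewhere S := by
  have hnhds := hF.isOpen_compl.mem_nhds hF₀
  rw [nhds_pi, Filter.mem_pi] at hnhds
  obtain ⟨I, hI, t, ht, hsub⟩ := hnhds
  refine ⟨hI.toFinset, fun x hxF => ?_⟩
  by_contra hx
  refine hsub (fun i hi => ?_) hxF
  have : x i = false := by simp_all [occupiedSomewhere]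
  exact this ▸ mem_of_mem_nhds (ht i)

lemma tendsto_diracProba_of_forall_isClosed {Ω ι : Type*} [MeasurableSpace Ω]
    [TopologicalSpace Ω] [OpensMeasurableSpace Ω] {L : Filter ι} [L.IsCountablyGenerated]
    {μs : ι → ProbabilityMeasure Ω} {x : Ω}
    (h : ∀ F, IsClosed F → x ∉ F → Tendsto (fun i => (μs i : Measure Ω) F) L (nhds 0)) :
    Tendsto μs L (nhds (diracProba x)) := by
  rcases L.eq_or_neBot with rfl | _
  · exact tendsto_bot
  refine tendsto_of_forall_isClosed_limsup_le' fun F hF => ?_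
  by_cases hx : x ∈ F
  · simpa [hx] using limsup_le_of_le (by isBoundedDefault)
      (Eventually.of_forall fun i => prob_le_one (μ := (μs i : Measure Ω)) (s := F))
  · simp [(h F hF hx).limsup_eq]

/-- part of Lemma 4.3: if model C is ergodic with unique invariant
measure `δ_{∘^ℤ}` (i.e. `ν F_C^n` converges weakly to `δ_{∘^ℤ}` for every probability
measure `ν`), then so is model B. -/
theorem modelC_ergodic_implies_modelB_ergodic (lam : Measure (ℤ → Bool))
    (hlam : IsUniformProduct lam)
    (hC : ∀ ν : Measure (ℤ → Bool), IsProbabilityMeasure ν →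
      ∀ f : BoundedContinuousFunction (ℤ → Bool) ℝ,
        Tendsto (fun n : ℕ => ∫ x, f x ∂((FC lam)^[n] ν)) atTop
          (nhds (∫ x, f x ∂(Measure.dirac emptyConfig)))) :
    ∀ ν : Measure (ℤ → Bool), IsProbabilityMeasure ν →
      ∀ f : BoundedContinuousFunction (ℤ → Bool) ℝ,
        Tendsto (fun n : ℕ => ∫ x, f x ∂((FB lam)^[n] ν)) atTop
          (nhds (∫ x, f x ∂(Measure.dirac emptyConfig))) := by
  have := hlam.1
  intro ν hν f
  let B n : ProbabilityMeasure (ℤ → Bool) := ⟨(FB lam)^[n] ν, inferInstance⟩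
  let C n : ProbabilityMeasure (ℤ → Bool) := ⟨(FC lam)^[n] ν, inferInstance⟩
  have hCδ : Tendsto C atTop (nhds (diracProba emptyConfig)) :=
    ProbabilityMeasure.tendsto_iff_forall_integral_tendsto.mpr (hC ν hν)
  suffices Tendsto B atTop (nhds (diracProba emptyConfig)) from
    ProbabilityMeasure.tendsto_iff_forall_integral_tendsto.mp this f
  refine tendsto_diracProba_of_forall_isClosed fun F hF hF₀ => ?_
  obtain ⟨S, hFS⟩ := exists_subset_occupiedSomewhere hF hF₀
  have hS := isClopen_occupiedSomewhere S
  have hCS : Tendsto (fun n => (C n : Measure (ℤ → Bool)) (occupiedSomewhere S)) atTop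
      (nhds 0) := by
    simpa [occupiedSomewhere, emptyConfig] using
      ProbabilityMeasure.tendsto_measure_of_null_frontier_of_tendsto' hCδ
        (E := occupiedSomewhere S) (by simp [hS.frontier_eq])
  exact tendsto_of_tendsto_of_tendsto_of_le_of_le tendsto_const_nhds hCS (fun _ => zero_le)
    fun n => (measure_mono hFS).trans <| stochasticallyLE_iterate_FB_FC lam ν n _
      hS.isOpen.measurableSet (isUpperSet_occupiedSomewhere S)
end

section
/- Main theorem: the PCA F_A on {0,1}^ℤ has a unique invariant probability measure, namely μ = (δ_{(01)^ℤ} + δ_{(10)^ℤ})/2, and F_A is non-ergodic: there exists a probability measure ν on {0,1}^ℤ such that νF_A^n does not converge weakly to μ. (Theorem 3.1.) -/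
open MeasureTheory ProbabilityTheory Filter

/-!
Conventions: a configuration of model A is `x : ℤ → Bool` (`false` = 0, `true` = 1);
an update configuration is `u : ℤ → Bool` (`true` = ↑, `false` = →).
The space `ℤ → Bool` carries the product topology (with `Bool` discrete) and the
product (Borel) σ-algebra; weak convergence is tested on bounded continuous functions.
-/

/-- The local map `𝒜` of model A: the `i`-th coordinate of `𝒜(x,u)` is `0` if
`x_{i-1}x_i = 01` or `(x_{i-1}x_i, u_i) ∈ {(00,→),(11,↑)}`, and `1` if
`x_{i-1}x_i = 10` or `(x_{i-1}x_i, u_i) ∈ {(00,↑),(11,→)}`.  The induced PCA has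
alphabet `{0,1}`, neighborhood `{-1,0}` and transition function `a` with
`a(00)(1) = 1/2`, `a(01)(1) = 0`, `a(10)(1) = 1`, `a(11)(1) = 1/2`. -/
def modelA (x u : ℤ → Bool) : ℤ → Bool := fun i =>
  if x (i - 1) = x i then xor (x i) (u i) else x (i - 1)

/-- `μ F_A`: the pushforward of `μ ⊗ lam` under `𝒜`. -/
noncomputable def FA (lam μ : Measure (ℤ → Bool)) : Measure (ℤ → Bool) :=
  Measure.map (fun p : (ℤ → Bool) × (ℤ → Bool) => modelA p.1 p.2) (μ.prod lam)

/-- The configuration `(01)^ℤ`: `x_{2n} = 0`, `x_{2n+1} = 1`. -/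
def conf01 : ℤ → Bool := fun i => decide (i % 2 = 1)

/-- The configuration `(10)^ℤ`: `x_{2n} = 1`, `x_{2n+1} = 0`. -/
def conf10 : ℤ → Bool := fun i => decide (i % 2 = 0)

/-- The measure `μ = (δ_{(01)^ℤ} + δ_{(10)^ℤ})/2`. -/
noncomputable def muA : Measure (ℤ → Bool) :=
  (1 / 2 : ENNReal) • (Measure.dirac conf01 + Measure.dirac conf10)

/-!
Call `i` a defect of `x` when `x (i - 1) = x i`. For an invariant `ν`, the defect
probabilities satisfy `p i = p (i - 1) - ν (defect (i - 1) ∩ defect i)`, so `p` is antitone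
and the probability of adjacent defects tends to `0` at `-∞`. Moving the left defect of a
pair one step to the right has probability at least `1/16`, so pairs at any fixed distance
also become rare at `-∞`. A window of `n` sites far to the left then carries at least
`n * p i` expected defects but rarely two of them, which forces `p i = 0`. Hence `ν` lives
on the two defect-free configurations `(01)^ℤ` and `(10)^ℤ`, which `F_A` swaps:
invariance forces equal weights, and `δ_{(01)^ℤ}` oscillates instead of converging.
-/

open Topology

lemma sum_measure_le_measure_univ_add_card_mul {α ι : Type*} [MeasurableSpace α] [DecidableEq ι]
    (μ : Measure α) (S : Finset ι) {E : ι → Set α} (hE : ∀ i, MeasurableSet (E i)) :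
    ∑ i ∈ S, μ (E i) ≤ μ Set.univ + S.card * ∑ p ∈ S.offDiag, μ (E p.1 ∩ E p.2) := by
  set B := ⋃ p ∈ S.offDiag, E p.1 ∩ E p.2
  have hB : MeasurableSet B := Finset.measurableSet_biUnion _ fun p _ => (hE _).inter (hE _)
  have hdisj : (S : Set ι).PairwiseDisjoint fun i => E i \ B := fun i hi j hj hij =>
    Set.disjoint_left.2 fun x hxi hxj =>
      hxi.2 <| Set.mem_biUnion (x := (i, j)) (Finset.mem_offDiag.2 ⟨hi, hj, hij⟩)
        ⟨hxi.1, hxj.1⟩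
  calc ∑ i ∈ S, μ (E i) ≤ ∑ i ∈ S, (μ (E i \ B) + μ B) := Finset.sum_le_sum fun i _ =>
        (measure_mono (Set.subset_sdiff_union _ _)).trans (measure_union_le _ _)
    _ = μ (⋃ i ∈ S, E i \ B) + S.card * μ B := by
        rw [Finset.sum_add_distrib, measure_biUnion_finset hdisj fun i _ => (hE i).diff hB,
          Finset.sum_const, nsmul_eq_mul]
    _ ≤ μ Set.univ + S.card * ∑ p ∈ S.offDiag, μ (E p.1 ∩ E p.2) := by
        gcongr
        · exact Set.subset_univ _
        · exact measure_biUnion_finset_le _ _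

lemma MeasureTheory.Measure.eq_smul_dirac_add_smul_dirac {α : Type*} [MeasurableSpace α]
    [MeasurableSingletonClass α] {μ : Measure α} {a b : α} (hab : a ≠ b)
    (h : μ {a, b}ᶜ = 0) :
    μ = μ {a} • Measure.dirac a + μ {b} • Measure.dirac b := by
  rw [← Measure.restrict_singleton, ← Measure.restrict_singleton,
    ← Measure.restrict_union (Set.disjoint_singleton.2 hab) (measurableSet_singleton b),
    Set.singleton_union, Measure.restrict_eq_self_of_ae_mem (ae_iff.2 h)]

def defect (i : ℤ) : Set (ℤ → Bool) := {x | x (i - 1) = x i}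

lemma measurableSet_defect (i : ℤ) : MeasurableSet (defect i) :=
  measurableSet_eq_fun (measurable_pi_apply _) (measurable_pi_apply _)

lemma measurable_modelA :
    Measurable fun p : (ℤ → Bool) × (ℤ → Bool) => modelA p.1 p.2 := by
  refine measurable_pi_lambda _ fun i => ?_
  let rule : Bool × Bool × Bool → Bool := fun q => if q.1 = q.2.1 then xor q.2.1 q.2.2 else q.1
  exact (measurable_of_countable rule).comp (by fun_prop :
    Measurable fun p : (ℤ → Bool) × (ℤ → Bool) => (p.1 (i - 1), p.1 i, p.2 i))

lemma modelA_of_mem_defect {x u : ℤ → Bool} {i : ℤ} (h : x ∈ defect i) :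
    modelA x u i = xor (x i) (u i) := if_pos h

lemma modelA_of_notMem_defect {x u : ℤ → Bool} {i : ℤ} (h : x ∉ defect i) :
    modelA x u i = x (i - 1) := if_neg h

lemma modelA_of_eq_false {x u : ℤ → Bool} {i : ℤ} (hu : u i = false) :
    modelA x u i = x (i - 1) := by
  by_cases h : x ∈ defect i
  · rw [modelA_of_mem_defect h, hu, Bool.xor_false]; exact h.symm
  · exact modelA_of_notMem_defect h

lemma measurableSet_cylinder (s : Finset ℤ) (f : ℤ → Bool) :
    MeasurableSet {u : ℤ → Bool | ∀ i ∈ s, u i = f i} := by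
  simp only [Set.ofPred_forall]
  exact Finset.measurableSet_biInter s fun i _ => measurableSet_eq_fun (measurable_pi_apply i)
    measurable_const

namespace IsUniformProduct

variable {lam : Measure (ℤ → Bool)}

lemma measure_coord_eq (hlam : IsUniformProduct lam) (i : ℤ) (b : Bool) :
    lam {u | u i = b} = 2⁻¹ := by
  simpa using hlam.2 {i} fun _ => b

lemma measure_coord_eq_coord (hlam : IsUniformProduct lam) {i j : ℤ} (hij : i ≠ j) :
    lam {u | u i = u j} = 2⁻¹ := by
  have hsplit : {u : ℤ → Bool | u i = u j} =
      {u | ∀ k ∈ ({i, j} : Finset ℤ), u k = false} ∪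
        {u | ∀ k ∈ ({i, j} : Finset ℤ), u k = true} := by
    ext u; cases h : u i <;> cases h' : u j <;> simp [h, h']
  have hdisj : Disjoint {u : ℤ → Bool | ∀ k ∈ ({i, j} : Finset ℤ), u k = false}
      {u | ∀ k ∈ ({i, j} : Finset ℤ), u k = true} :=
    Set.disjoint_left.2 fun u h h' => by simpa [h i (by simp)] using h' i (by simp)
  rw [hsplit, measure_union hdisj (measurableSet_cylinder _ _), hlam.2, hlam.2,
    Finset.card_pair hij, ← two_mul, one_div, pow_two, ← mul_assoc,
    ENNReal.mul_inv_cancel two_ne_zero ENNReal.ofNat_ne_top, one_mul]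

lemma inv_sixteen_le_measure_cylinder (hlam : IsUniformProduct lam) {s : Finset ℤ}
    (hs : s.card ≤ 4) (f : ℤ → Bool) : 16⁻¹ ≤ lam {u | ∀ i ∈ s, u i = f i} := by
  rw [hlam.2, show (16 : ENNReal)⁻¹ = (1 / 2) ^ 4 by rw [one_div, ← ENNReal.inv_pow]; norm_num]
  exact pow_le_pow_of_le_one (zero_le ..) (by norm_num) hs

end IsUniformProduct

section Linearity

variable {lam : Measure (ℤ → Bool)} [SFinite lam]

lemma FA_apply (ν : Measure (ℤ → Bool)) {E : Set (ℤ → Bool)} (hE : MeasurableSet E) :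
    FA lam ν E = ∫⁻ x, lam {u | modelA x u ∈ E} ∂ν := by
  rw [FA, Measure.map_apply measurable_modelA hE, Measure.prod_apply (measurable_modelA hE)]
  rfl

lemma FA_add (μ ν : Measure (ℤ → Bool)) [SFinite μ] [SFinite ν] :
    FA lam (μ + ν) = FA lam μ + FA lam ν := by
  rw [FA, Measure.add_prod, Measure.map_add _ _ measurable_modelA]; rfl

lemma FA_smul (c : ENNReal) (μ : Measure (ℤ → Bool)) :
    FA lam (c • μ) = c • FA lam μ := by
  rw [FA, Measure.prod_smul_left, Measure.map_smul]; rfl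

lemma FA_dirac_of_forall [IsProbabilityMeasure lam] {x y : ℤ → Bool}
    (h : ∀ u, modelA x u = y) : FA lam (Measure.dirac x) = Measure.dirac y := by
  rw [FA, Measure.dirac_prod, Measure.map_map measurable_modelA measurable_prodMk_left]
  simp [Function.comp_def, h]

end Linearity

lemma conf01_sub_one (i : ℤ) : conf01 (i - 1) = conf10 i := by
  simp only [conf01, conf10, decide_eq_decide]; omega

lemma conf10_sub_one (i : ℤ) : conf10 (i - 1) = conf01 i := by
  simp only [conf01, conf10, decide_eq_decide]; omega

lemma conf01_ne_conf10 : conf01 ≠ conf10 := fun h => by simpa [conf01, conf10] using congrFun h 0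

lemma modelA_conf01 (u : ℤ → Bool) : modelA conf01 u = conf10 := by
  funext i
  rw [modelA_of_notMem_defect (by
    simp only [defect, Set.mem_ofPred_eq, conf01, decide_eq_decide]; omega), conf01_sub_one]

lemma modelA_conf10 (u : ℤ → Bool) : modelA conf10 u = conf01 := by
  funext i
  rw [modelA_of_notMem_defect (by
    simp only [defect, Set.mem_ofPred_eq, conf10, decide_eq_decide]; omega), conf10_sub_one]

lemma FA_dirac_conf01 (lam : Measure (ℤ → Bool)) [IsProbabilityMeasure lam] :
    FA lam (Measure.dirac conf01) = Measure.dirac conf10 :=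
  FA_dirac_of_forall modelA_conf01

lemma FA_dirac_conf10 (lam : Measure (ℤ → Bool)) [IsProbabilityMeasure lam] :
    FA lam (Measure.dirac conf10) = Measure.dirac conf01 :=
  FA_dirac_of_forall modelA_conf10

lemma FA_smul_dirac_add_smul_dirac (lam : Measure (ℤ → Bool)) [IsProbabilityMeasure lam]
    (a b : ENNReal) :
    FA lam (a • Measure.dirac conf01 + b • Measure.dirac conf10) =
      b • Measure.dirac conf01 + a • Measure.dirac conf10 := by
  rw [FA_add, FA_smul, FA_smul, FA_dirac_conf01, FA_dirac_conf10, add_comm]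

lemma FA_muA (lam : Measure (ℤ → Bool)) [IsProbabilityMeasure lam] : FA lam muA = muA := by
  rw [muA, FA_smul, FA_add, FA_dirac_conf01, FA_dirac_conf10, add_comm]

section Invariant

variable {lam ν : Measure (ℤ → Bool)}

lemma lam_modelA_mem_defect (hlam : IsUniformProduct lam) (x : ℤ → Bool) (i : ℤ) :
    lam {u | modelA x u ∈ defect i} =
      (defect (i - 1) ∪ defect i).indicator (fun _ => 2⁻¹) x := by
  by_cases hprev : x ∈ defect (i - 1) <;> by_cases hcur : x ∈ defect i
  · have hset : {u | modelA x u ∈ defect i} = {u | u (i - 1) = u i} := by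
      ext u
      simp only [defect, Set.mem_ofPred_eq] at hprev hcur ⊢
      rw [modelA_of_mem_defect hprev, modelA_of_mem_defect hcur, hcur]
      cases x i <;> simp
    rw [hset, hlam.measure_coord_eq_coord (by omega), Set.indicator_of_mem (.inr hcur)]
  · have hset : {u | modelA x u ∈ defect i} = {u | u (i - 1) = false} := by
      ext u
      simp only [defect, Set.mem_ofPred_eq] at hprev ⊢
      rw [modelA_of_mem_defect hprev, modelA_of_notMem_defect hcur]
      cases x (i - 1) <;> simp
    rw [hset, hlam.measure_coord_eq, Set.indicator_of_mem (.inl hprev)]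
  · have hset : {u | modelA x u ∈ defect i} = {u | u i = xor (x i) (x (i - 1 - 1))} := by
      ext u
      simp only [defect, Set.mem_ofPred_eq] at hcur ⊢
      rw [modelA_of_notMem_defect hprev, modelA_of_mem_defect hcur]
      cases x i <;> cases u i <;> simp
    rw [hset, hlam.measure_coord_eq, Set.indicator_of_mem (.inr hcur)]
  · have hset : {u | modelA x u ∈ defect i} = ∅ := by
      ext u
      simp only [defect, Set.mem_ofPred_eq, Set.mem_empty_iff_false, iff_false]
      rw [modelA_of_notMem_defect hprev, modelA_of_notMem_defect hcur]
      exact hprev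
    rw [hset, measure_empty, Set.indicator_of_notMem (by rintro (h | h) <;> contradiction)]

lemma measure_defect_inter_add_measure_defect [IsFiniteMeasure ν] (hlam : IsUniformProduct lam)
    (hinv : FA lam ν = ν) (i : ℤ) :
    ν (defect (i - 1) ∩ defect i) + ν (defect i) = ν (defect (i - 1)) := by
  have : IsProbabilityMeasure lam := hlam.1
  have hhalf : ν (defect i) = 2⁻¹ * ν (defect (i - 1) ∪ defect i) := by
    conv_lhs => rw [← hinv, FA_apply ν (measurableSet_defect i)]
    simp_rw [lam_modelA_mem_defect hlam]
    exact lintegral_indicator_const ((measurableSet_defect _).union (measurableSet_defect _)) _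
  have hunion : ν (defect (i - 1) ∪ defect i) = ν (defect i) + ν (defect i) := by
    rw [hhalf, ← two_mul, ← mul_assoc, ENNReal.mul_inv_cancel two_ne_zero ENNReal.ofNat_ne_top,
      one_mul]
  have hincl := measure_union_add_inter (defect (i - 1)) (measurableSet_defect i) (μ := ν)
  rw [hunion, add_assoc, add_comm (ν (defect (i - 1)))] at hincl
  exact (add_comm _ _).trans ((ENNReal.add_right_inj (measure_ne_top ν _)).1 hincl)

lemma antitone_measure_defect [IsFiniteMeasure ν] (hlam : IsUniformProduct lam)
    (hinv : FA lam ν = ν) :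
    Antitone fun i => ν (defect i) :=
  antitone_int_of_succ_le fun i => by
    simpa using (measure_defect_inter_add_measure_defect hlam hinv (i + 1)).le.trans' le_add_self

lemma tendsto_measure_defect_inter_succ [IsFiniteMeasure ν] (hlam : IsUniformProduct lam)
    (hinv : FA lam ν = ν) :
    Tendsto (fun i => ν (defect (i - 1) ∩ defect i)) atBot (𝓝 0) := by
  have hanti := antitone_measure_defect hlam hinv
  have hlim := tendsto_atBot_iSup hanti
  have hpred : Tendsto (fun i : ℤ => i - 1) atBot atBot := by
    simpa [sub_eq_add_neg] using tendsto_atBot_add_const_right atBot (-1 : ℤ) tendsto_id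
  have hdiff := ENNReal.Tendsto.sub (hlim.comp hpred) hlim
    (.inl (ne_top_of_le_ne_top (measure_ne_top ν Set.univ) (iSup_le fun _ => measure_mono
      (Set.subset_univ _))))
  rw [tsub_self] at hdiff
  refine hdiff.congr fun i => ?_
  rw [Function.comp_apply, ← measure_defect_inter_add_measure_defect hlam hinv i,
    ENNReal.add_sub_cancel_right (measure_ne_top ν _)]

lemma lam_modelA_mem_defect_inter_ge (hlam : IsUniformProduct lam)
    {i j : ℤ} (hji : j < i) {x : ℤ → Bool} (hx : x ∈ defect (j - 1) ∩ defect i) :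
    16⁻¹ ≤ lam {u | modelA x u ∈ defect j ∩ defect i} := by
  -- `u = false` at `j - 1`, `j`, `i - 1` makes these sites copy their left neighbour, and
  -- `u i` is chosen so that site `i` does too.
  refine (hlam.inv_sixteen_le_measure_cylinder (s := {j - 1, j, i - 1, i})
    (Finset.card_le_four) (Function.update (fun _ => false) i (xor (x i) (x (i - 1 - 1))))).trans
    (measure_mono fun u hu => ?_)
  simp only [Finset.mem_insert, Finset.mem_singleton, forall_eq_or_imp, forall_eq,
    Set.mem_ofPred_eq] at hu
  obtain ⟨h₁, h₂, h₃, h₄⟩ := hu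
  rw [Function.update_of_ne (by omega)] at h₁ h₂ h₃
  rw [Function.update_self] at h₄
  obtain ⟨hxj, hxi⟩ := hx
  simp only [defect, Set.mem_ofPred_eq] at hxj
  refine ⟨?_, ?_⟩
  · simp only [defect, Set.mem_ofPred_eq, modelA_of_eq_false h₁, modelA_of_eq_false h₂, hxj]
  · simp only [defect, Set.mem_ofPred_eq, modelA_of_eq_false h₃, modelA_of_mem_defect hxi, h₄]
    cases x i <;> simp

lemma measure_defect_inter_le (hlam : IsUniformProduct lam) (hinv : FA lam ν = ν)
    {i j : ℤ} (hji : j < i) :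
    ν (defect (j - 1) ∩ defect i) ≤ 16 * ν (defect j ∩ defect i) := by
  have : IsProbabilityMeasure lam := hlam.1
  have hmeas (k : ℤ) : MeasurableSet (defect k ∩ defect i) :=
    (measurableSet_defect k).inter (measurableSet_defect i)
  have hlow : 16⁻¹ * ν (defect (j - 1) ∩ defect i) ≤ ν (defect j ∩ defect i) := by
    rw [← lintegral_indicator_const (hmeas _), ← hinv, FA_apply ν (hmeas j), hinv]
    refine lintegral_mono fun x => ?_
    by_cases hx : x ∈ defect (j - 1) ∩ defect i
    · rw [Set.indicator_of_mem hx]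
      exact lam_modelA_mem_defect_inter_ge hlam hji hx
    · rw [Set.indicator_of_notMem hx]
      exact zero_le ..
  calc ν (defect (j - 1) ∩ defect i) = 16 * (16⁻¹ * ν (defect (j - 1) ∩ defect i)) := by
        rw [← mul_assoc, ENNReal.mul_inv_cancel (by norm_num) (by norm_num), one_mul]
    _ ≤ 16 * ν (defect j ∩ defect i) := by gcongr

lemma tendsto_measure_defect_sub_inter [IsFiniteMeasure ν] (hlam : IsUniformProduct lam)
    (hinv : FA lam ν = ν) (d : ℕ) :
    Tendsto (fun i => ν (defect (i - d - 1) ∩ defect i)) atBot (𝓝 0) := by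
  induction d with
  | zero => simpa using tendsto_measure_defect_inter_succ hlam hinv
  | succ d ih =>
    refine tendsto_of_tendsto_of_tendsto_of_le_of_le tendsto_const_nhds
      (by simpa using ENNReal.Tendsto.const_mul ih (.inr (by norm_num : (16 : ENNReal) ≠ ⊤)))
      (fun _ => zero_le ..) fun i => ?_
    simpa [sub_sub] using measure_defect_inter_le hlam hinv (j := i - d - 1) (i := i) (by omega)

lemma tendsto_measure_defect_add_inter [IsFiniteMeasure ν] (hlam : IsUniformProduct lam)
    (hinv : FA lam ν = ν) {s t : ℤ} (hst : s ≠ t) :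
    Tendsto (fun a => ν (defect (a + s) ∩ defect (a + t))) atBot (𝓝 0) := by
  wlog hlt : s < t generalizing s t
  · simpa only [Set.inter_comm] using this hst.symm (by omega)
  have hshift := (tendsto_measure_defect_sub_inter hlam hinv (t - s - 1).toNat).comp
    (tendsto_atBot_add_const_right atBot t tendsto_id)
  refine hshift.congr fun a => ?_
  simp only [Function.comp_apply, id]
  congr 3
  omega

lemma measure_defect_eq_zero [IsFiniteMeasure ν] (hlam : IsUniformProduct lam)
    (hinv : FA lam ν = ν) (i : ℤ) : ν (defect i) = 0 := by
  have hbound (n : ℕ) : n * ν (defect i) ≤ ν Set.univ := by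
    set pairs := fun a : ℤ => ∑ p ∈ (Finset.range n).offDiag,
      ν (defect (a + p.1) ∩ defect (a + p.2))
    have hwindow (a : ℤ) (ha : a ≤ i - n) : n * ν (defect i) ≤ ν Set.univ + n * pairs a :=
      calc n * ν (defect i) = ∑ _k ∈ Finset.range n, ν (defect i) := by simp
        _ ≤ ∑ k ∈ Finset.range n, ν (defect (a + k)) := Finset.sum_le_sum fun k hk =>
            antitone_measure_defect hlam hinv (by simp only [Finset.mem_range] at hk; omega)
        _ ≤ ν Set.univ + n * pairs a := by
            simpa using sum_measure_le_measure_univ_add_card_mul ν (Finset.range n)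
              fun k => measurableSet_defect (a + k)
    have hpairs : Tendsto pairs atBot (𝓝 0) := by
      simpa using tendsto_finsetSum _ fun (p : ℕ × ℕ) hp =>
        tendsto_measure_defect_add_inter hlam hinv (s := p.1) (t := p.2)
          (by simp only [Finset.mem_offDiag] at hp; omega)
    have hlim : Tendsto (fun a => ν Set.univ + n * pairs a) atBot (𝓝 (ν Set.univ)) := by
      simpa using tendsto_const_nhds.add
        (ENNReal.Tendsto.const_mul hpairs (.inr (ENNReal.natCast_ne_top n)))
    exact ge_of_tendsto hlim (eventually_atBot.2 ⟨i - n, hwindow⟩)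
  by_contra h
  obtain ⟨n, hn⟩ := ENNReal.exists_nat_mul_gt h (measure_ne_top ν Set.univ)
  exact (hbound n).not_gt hn

end Invariant

lemma eq_conf01_or_eq_conf10 {x : ℤ → Bool} (hx : ∀ i, x ∉ defect i) :
    x = conf01 ∨ x = conf10 := by
  have hflip (i : ℤ) : x (i - 1) = !x i := by
    have := hx i
    simp only [defect, Set.mem_ofPred_eq] at this
    cases h : x i <;> simp_all
  have hconf (i : ℤ) : conf01 (i - 1) = !conf01 i := by
    simp only [conf01, ← decide_not, decide_eq_decide]; omega
  have hperiodic : Function.Periodic (fun i => xor (x i) (conf01 i)) 1 := fun i => by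
    simpa [hflip, hconf] using (congrArg₂ xor (hflip (i + 1)) (hconf (i + 1))).symm
  have hx_eq (i : ℤ) : x i = xor (x 0) (conf01 i) := by
    have h : xor (x i) (conf01 i) = x 0 := by simpa [conf01] using hperiodic.zsmul_eq i
    rw [← h, Bool.xor_assoc, Bool.xor_self, Bool.xor_false]
  cases h0 : x 0
  · exact .inl (funext fun i => by simp [hx_eq i, h0])
  · refine .inr (funext fun i => ?_)
    simp only [hx_eq i, h0, Bool.true_xor, conf01, conf10, ← decide_not, decide_eq_decide]
    omega

lemma eq_muA_of_FA_eq {lam ν : Measure (ℤ → Bool)} [IsProbabilityMeasure ν]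
    (hlam : IsUniformProduct lam) (hinv : FA lam ν = ν) : ν = muA := by
  have : IsProbabilityMeasure lam := hlam.1
  have hsupp : ν {conf01, conf10}ᶜ = 0 := by
    refine measure_mono_null (fun x hx => ?_)
      (measure_iUnion_null (measure_defect_eq_zero hlam hinv))
    by_contra h
    simp only [Set.mem_iUnion, not_exists] at h
    rcases eq_conf01_or_eq_conf10 h with rfl | rfl <;> simp at hx
  have hν := Measure.eq_smul_dirac_add_smul_dirac conf01_ne_conf10 hsupp
  have hswap := hinv
  rw [hν, FA_smul_dirac_add_smul_dirac] at hswap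
  have hBA : ν {conf10} = ν {conf01} := by
    simpa [conf01_ne_conf10.symm] using congrArg (· {conf01}) hswap
  have hA : ν {conf01} = 2⁻¹ := by
    refine ENNReal.eq_inv_of_mul_eq_one_left ?_
    simpa [hBA, mul_two] using congrArg (· Set.univ) hν.symm
  rw [hν, hBA, hA, muA, smul_add, one_div]

lemma FA_iterate_two_mul_dirac_conf01 (lam : Measure (ℤ → Bool)) [IsProbabilityMeasure lam]
    (k : ℕ) : (FA lam)^[2 * k] (Measure.dirac conf01) = Measure.dirac conf01 := by
  refine Function.IsPeriodicPt.mul_const ?_ k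
  simp [Function.IsPeriodicPt, Function.IsFixedPt, FA_dirac_conf01, FA_dirac_conf10]

lemma FA_iterate_two_mul_add_one_dirac_conf01 (lam : Measure (ℤ → Bool))
    [IsProbabilityMeasure lam] (k : ℕ) :
    (FA lam)^[2 * k + 1] (Measure.dirac conf01) = Measure.dirac conf10 := by
  rw [Function.iterate_succ_apply', FA_iterate_two_mul_dirac_conf01, FA_dirac_conf01]

lemma not_tendsto_integral_FA_iterate_dirac_conf01 (lam : Measure (ℤ → Bool))
    [IsProbabilityMeasure lam] (μ : Measure (ℤ → Bool)) :
    ¬ ∀ f : BoundedContinuousFunction (ℤ → Bool) ℝ,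
      Tendsto (fun n : ℕ => ∫ x, f x ∂((FA lam)^[n] (Measure.dirac conf01))) atTop
        (𝓝 (∫ x, f x ∂μ)) := by
  intro h
  let f : BoundedContinuousFunction (ℤ → Bool) ℝ := .mkOfCompact
    ⟨fun x => if x 0 then 1 else 0,
      (continuous_of_discreteTopology (f := fun b : Bool => if b then (1 : ℝ) else 0)).comp
        (continuous_apply 0)⟩
  have heven := (h f).comp (strictMono_mul_left_of_pos two_pos).tendsto_atTop
  have hodd := (h f).comp (show StrictMono fun k : ℕ => 2 * k + 1 from
    fun _ _ hk => by dsimp only; omega).tendsto_atTop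
  simp only [Function.comp_def, FA_iterate_two_mul_dirac_conf01,
    FA_iterate_two_mul_add_one_dirac_conf01, integral_dirac] at heven hodd
  have := (tendsto_nhds_unique tendsto_const_nhds heven).trans
    (tendsto_nhds_unique tendsto_const_nhds hodd).symm
  simp [f, conf01, conf10] at this

/-- Theorem 3.1, main theorem: the PCA `F_A` has
`μ = (δ_{(01)^ℤ} + δ_{(10)^ℤ})/2` as its unique invariant probability measure, and it
is non-ergodic: there is a probability measure `ν` such that `ν F_A^n` does not
converge weakly to `μ`. -/
theorem modelA_unique_invariant_non_ergodic (lam : Measure (ℤ → Bool))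
    (hlam : IsUniformProduct lam) :
    FA lam muA = muA ∧
    (∀ ν : Measure (ℤ → Bool), IsProbabilityMeasure ν → FA lam ν = ν → ν = muA) ∧
    (∃ ν : Measure (ℤ → Bool), IsProbabilityMeasure ν ∧
      ¬ (∀ f : BoundedContinuousFunction (ℤ → Bool) ℝ,
          Tendsto (fun n : ℕ => ∫ x, f x ∂((FA lam)^[n] ν)) atTop
            (nhds (∫ x, f x ∂muA)))) := by
  have : IsProbabilityMeasure lam := hlam.1
  exact ⟨FA_muA lam, fun ν _ hinv => eq_muA_of_FA_eq hlam hinv,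
    Measure.dirac conf01, inferInstance, not_tendsto_integral_FA_iterate_dirac_conf01 lam muA⟩
end
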